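/- arXiv:1305.0632 — 5 statements merged into one kernel-verified Lean document; each statement's English description precedes it below -/
import Mathlib

section
/- The 4×4 partial symmetric matrix with entries A₁₁=2, A₁₂=3, A₁₃=0, A₂₂=6, A₂₃=3, A₂₄=0, A₃₃=6, A₃₄=3, A₄₄=2, and with the (1,4)-entry missing, is not CP-completable: for every real value t assigned to the (1,4) and (4,1) entries, the completed symmetric matrix is not completely positive. -/
/-- A real `n × n` matrix is completely positive if `C = B * Bᵀ` for some
entrywise nonnegative matrix `B`. -/
def IsCP {n : ℕ} (C : Matrix (Fin n) (Fin n) ℝ) : Prop :=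
  ∃ (m : ℕ) (B : Matrix (Fin n) (Fin m) ℝ), (∀ i j, 0 ≤ B i j) ∧ C = B * B.transpose

/-!
A completely positive matrix `B * Bᵀ` with `B ≥ 0` is positive semidefinite and entrywise
nonnegative, so `t ≥ 0`. But the quadratic form of the completion at `(1, -1, 1, -1)` equals
`-2 - 2t`, which is negative for `t > -1`.
-/

namespace IsCP

variable {n : ℕ} {C : Matrix (Fin n) (Fin n) ℝ}

theorem posSemidef (hC : IsCP C) : C.PosSemidef := by
  obtain ⟨m, B, -, rfl⟩ := hC
  simpa only [Matrix.conjTranspose_eq_transpose_of_trivial] using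
    Matrix.posSemidef_self_mul_conjTranspose B

theorem nonneg (hC : IsCP C) (i j : Fin n) : 0 ≤ C i j := by
  obtain ⟨m, B, hB, rfl⟩ := hC
  rw [Matrix.mul_apply]
  exact Finset.sum_nonneg fun k _ => mul_nonneg (hB i k) (hB j k)

end IsCP

open Matrix in
theorem dotProduct_mulVec_alternating_completion (t : ℝ) :
    star ![(1 : ℝ), -1, 1, -1] ⬝ᵥ
      (!![2, 3, 0, t; 3, 6, 3, 0; 0, 3, 6, 3; t, 0, 3, 2] *ᵥ ![1, -1, 1, -1]) = -2 - 2 * t := by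
  simp only [star_trivial, dotProduct, mulVec, Fin.sum_univ_four, of_apply, cons_val, Fin.isValue]
  ring

/-- The partial matrix of (2.1) with the missing `(1,4)`-entry filled by `t`
is never completely positive, i.e. the partial matrix is not CP-completable. -/
theorem example_2_23_not_cp_completable :
    ∀ t : ℝ, ¬ IsCP !![2, 3, 0, t; 3, 6, 3, 0; 0, 3, 6, 3; t, 0, 3, 2] := by
  intro t hCP
  have ht : 0 ≤ t := hCP.nonneg 0 3
  have hq := hCP.posSemidef.dotProduct_mulVec_nonneg ![1, -1, 1, -1]
  rw [dotProduct_mulVec_alternating_completion] at hq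
  linarith
end

section
/- Let E ⊆ {(i,j) : 1 ≤ i ≤ j ≤ n} be an index set of pairs and let 𝓔 = {e_i + e_j : (i,j) ∈ E} ⊆ ℕⁿ be the corresponding set of exponent vectors of degree 2. The span ℝ[x]_𝓔 of the monomials {x^α : α ∈ 𝓔} contains a polynomial that is strictly positive on the standard simplex Δ if and only if (i,i) ∈ E for every i ∈ {1,…,n}. -/
/-- A polynomial in the span of the monomials `x_i * x_j` for `(i,j) ∈ E`,
given by coefficients `c`, evaluated at `x`. -/
def evalE {n : ℕ} (E : Finset (Fin n × Fin n)) (c : Fin n × Fin n → ℝ)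
    (x : Fin n → ℝ) : ℝ :=
  ∑ p ∈ E, c p * x p.1 * x p.2

/-! A quadratic form without the term `x_i²` vanishes at the vertex `e_i` of the simplex, so
positivity on `Δ` forces every diagonal pair into `E`. Conversely, if `E` contains the whole
diagonal, then `∑ x_i²` lies in the span, and it is positive on `Δ` because points of `Δ` are
nonzero. -/

open Finset

lemma sum_sq_pos_of_mem_stdSimplex {𝕜 ι : Type*} [Field 𝕜] [LinearOrder 𝕜]
    [IsStrictOrderedRing 𝕜] [Fintype ι] {x : ι → 𝕜} (hx : x ∈ stdSimplex 𝕜 ι) :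
    0 < ∑ i, x i ^ 2 := by
  obtain ⟨i, -, hi⟩ := exists_ne_zero_of_sum_ne_zero (hx.2 ▸ one_ne_zero : ∑ i, x i ≠ 0)
  exact sum_pos' (fun j _ => sq_nonneg (x j)) ⟨i, mem_univ i, pow_pos ((hx.1 i).lt_of_ne' hi) 2⟩

section evalE

variable {n : ℕ} (E : Finset (Fin n × Fin n))

lemma evalE_single_one (c : Fin n × Fin n → ℝ) (i : Fin n) :
    evalE E c (Pi.single i 1) = if (i, i) ∈ E then c (i, i) else 0 := by
  have term : ∀ p : Fin n × Fin n,
      c p * (Pi.single i 1 : Fin n → ℝ) p.1 * (Pi.single i 1 : Fin n → ℝ) p.2 =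
        if (i, i) = p then c p else 0 := by
    rintro ⟨a, b⟩
    rcases eq_or_ne a i with rfl | ha
    · rcases eq_or_ne b a with rfl | hb
      · simp
      · simp [hb, hb.symm]
    · simp [ha, ha.symm]
  simp only [evalE, term, sum_ite_eq]

lemma evalE_diagonal_of_forall_mem (hdiag : ∀ i, (i, i) ∈ E) (x : Fin n → ℝ) :
    evalE E (fun p => if p.1 = p.2 then 1 else 0) x = ∑ i, x i ^ 2 := by
  have hsub : univ.image (fun i => (i, i)) ⊆ E := by
    simpa [subset_iff] using hdiag
  have hoff : ∀ p ∈ E, p ∉ univ.image (fun i => (i, i)) →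
      (if p.1 = p.2 then (1 : ℝ) else 0) * x p.1 * x p.2 = 0 := by
    rintro ⟨a, b⟩ - hp
    have hab : a ≠ b := by rintro rfl; simp at hp
    simp [hab]
  rw [evalE, ← sum_subset hsub hoff, sum_image (fun a _ b _ h => (Prod.ext_iff.mp h).1)]
  simp [sq]

end evalE

theorem deltaFull_iff_diagonal_general {n : ℕ} (E : Finset (Fin n × Fin n)) :
    (∃ c : Fin n × Fin n → ℝ, ∀ x ∈ stdSimplex ℝ (Fin n), 0 < evalE E c x) ↔
      ∀ i : Fin n, (i, i) ∈ E := by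
  constructor
  · rintro ⟨c, hc⟩ i
    by_contra hi
    have hpos := hc _ (single_mem_stdSimplex ℝ i)
    rw [evalE_single_one, if_neg hi] at hpos
    exact hpos.false
  · intro hdiag
    refine ⟨fun p => if p.1 = p.2 then 1 else 0, fun x hx => ?_⟩
    rw [evalE_diagonal_of_forall_mem E hdiag]
    exact sum_sq_pos_of_mem_stdSimplex hx

/-- `ℝ[x]_𝓔` is `Δ`-full (some member is strictly positive on the standard
simplex `Δ`) if and only if all diagonal pairs `(i,i)` belong to `E`. -/
theorem deltaFull_iff_diagonal {n : ℕ} (E : Finset (Fin n × Fin n))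
    (hE : ∀ p ∈ E, p.1 ≤ p.2) :
    (∃ c : Fin n × Fin n → ℝ, ∀ x ∈ stdSimplex ℝ (Fin n), 0 < evalE E c x) ↔
      ∀ i : Fin n, (i, i) ∈ E :=
  deltaFull_iff_diagonal_general E
end

section
/- For a partial nonnegative symmetric matrix A with index set E in which (1,1) is the only diagonal index in E, A₁₁ > 0, and (1,j) ∉ E for all j > 1 (i.e., no other entries in the first row are given), the matrix C = A₁₁ e₁e₁ᵀ + Σ_{2≤i<j≤n, (i,j)∈E} A_{ij}(e_i+e_j)(e_i+e_j)ᵀ is a completely positive completion of A. -/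
/-- The candidate completion
`C = A₀₀ e₀e₀ᵀ + Σ_{(i,j)∈E, (i,j)≠(0,0)} A_{ij}(e_i+e_j)(e_i+e_j)ᵀ`. -/
noncomputable def completionC {n : ℕ} (E : Finset (Fin (n+1) × Fin (n+1)))
    (A : Fin (n+1) × Fin (n+1) → ℝ) : Matrix (Fin (n+1)) (Fin (n+1)) ℝ :=
  A (0, 0) • Matrix.vecMulVec (Pi.single 0 1) (Pi.single 0 1) +
    ∑ p ∈ E.erase (0, 0), A p • Matrix.vecMulVec
      (Pi.single p.1 1 + Pi.single p.2 1) (Pi.single p.1 1 + Pi.single p.2 1)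

/-!
Completely positive matrices form a convex cone containing every `a • v vᵀ` with `a ≥ 0` and
`v ≥ 0`, so the completion is completely positive. For its entries: the rank-one term of an
off-diagonal pair `q = (a, b)` with `a < b` is supported on `{a, b}²`, hence its only nonzero entry
strictly above the diagonal is the one at `q` itself. Since `E` has no other given entry in row `0`,
none of these terms touches the entry `(0, 0)`.
-/

open Matrix

namespace IsCP

variable {n : ℕ}

lemma zero : IsCP (0 : Matrix (Fin n) (Fin n) ℝ) :=
  ⟨0, 0, fun _ _ => le_rfl, by simp⟩

lemma add {C D : Matrix (Fin n) (Fin n) ℝ} (hC : IsCP C) (hD : IsCP D) : IsCP (C + D) := by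
  obtain ⟨m₁, B₁, hB₁, rfl⟩ := hC
  obtain ⟨m₂, B₂, hB₂, rfl⟩ := hD
  refine ⟨m₁ + m₂, of fun i => Fin.append (B₁ i) (B₂ i), fun i k => ?_, ?_⟩
  · refine Fin.addCases (fun k => ?_) (fun k => ?_) k <;> simp [hB₁, hB₂]
  · ext i j
    simp [mul_apply, Fin.sum_univ_add]

lemma sum {ι : Type*} {s : Finset ι} {C : ι → Matrix (Fin n) (Fin n) ℝ}
    (hC : ∀ i ∈ s, IsCP (C i)) : IsCP (∑ i ∈ s, C i) :=
  Finset.sum_induction C IsCP (fun _ _ => add) zero hC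

lemma smul_vecMulVec_self {a : ℝ} {v : Fin n → ℝ} (ha : 0 ≤ a) (hv : 0 ≤ v) :
    IsCP (a • vecMulVec v v) := by
  refine ⟨1, replicateCol (Fin 1) (√a • v), fun i _ => mul_nonneg (Real.sqrt_nonneg a) (hv i), ?_⟩
  rw [transpose_replicateCol]
  calc a • vecMulVec v v = vecMulVec (√a • v) (√a • v) := by
        rw [smul_vecMulVec, vecMulVec_smul, smul_smul, Real.mul_self_sqrt ha]
    _ = _ := vecMulVec_eq _ _ _

end IsCP

lemma single_add_single_mul_single_add_single_of_lt {α R : Type*} [LinearOrder α]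
    [NonAssocSemiring R] {a b i j : α} (hab : a < b) (hij : i < j) :
    (Pi.single a 1 + Pi.single b 1 : α → R) i * (Pi.single a 1 + Pi.single b 1 : α → R) j =
      if (a, b) = (i, j) then 1 else 0 := by
  simp only [Pi.add_apply, Pi.single_apply, Prod.mk.injEq]
  split_ifs <;> subst_vars <;> first | (exfalso; order) | simp_all

section completionC

variable {n : ℕ} {E : Finset (Fin (n + 1) × Fin (n + 1))} {A : Fin (n + 1) × Fin (n + 1) → ℝ}

lemma isCP_completionC (h₀ : 0 ≤ A (0, 0)) (hA : ∀ p ∈ E.erase (0, 0), 0 ≤ A p) :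
    IsCP (completionC E A) := by
  have hsingle (i : Fin (n + 1)) : 0 ≤ (Pi.single i 1 : Fin (n + 1) → ℝ) :=
    Pi.single_nonneg.2 zero_le_one
  exact (IsCP.smul_vecMulVec_self h₀ (hsingle 0)).add <| IsCP.sum fun p hp =>
    IsCP.smul_vecMulVec_self (hA p hp) (add_nonneg (hsingle p.1) (hsingle p.2))

lemma completionC_apply (i j : Fin (n + 1)) :
    completionC E A i j = A (0, 0) * ((Pi.single 0 1 : Fin (n + 1) → ℝ) i *
      (Pi.single 0 1 : Fin (n + 1) → ℝ) j) +
      ∑ q ∈ E.erase (0, 0), A q * ((Pi.single q.1 1 + Pi.single q.2 1 : Fin (n + 1) → ℝ) i *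
        (Pi.single q.1 1 + Pi.single q.2 1 : Fin (n + 1) → ℝ) j) := by
  simp only [completionC, Matrix.add_apply, Matrix.smul_apply, Matrix.sum_apply, vecMulVec_apply,
    smul_eq_mul]

lemma completionC_apply_zero_zero (hE : ∀ q ∈ E.erase (0, 0), 0 < q.1 ∧ q.1 < q.2) :
    completionC E A 0 0 = A (0, 0) := by
  rw [completionC_apply, Finset.sum_eq_zero fun q hq => ?_]
  · simp
  · have h₁ : q.1 ≠ 0 := (hE q hq).1.ne'
    have h₂ : q.2 ≠ 0 := ((hE q hq).1.trans (hE q hq).2).ne'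
    simp [h₁.symm, h₂.symm]

lemma completionC_apply_of_mem_erase (hE : ∀ q ∈ E.erase (0, 0), 0 < q.1 ∧ q.1 < q.2)
    {p : Fin (n + 1) × Fin (n + 1)} (hp : p ∈ E.erase (0, 0)) :
    completionC E A p.1 p.2 = A p := by
  rw [completionC_apply, Finset.sum_congr rfl fun q hq => by
    rw [single_add_single_mul_single_add_single_of_lt (hE q hq).2 (hE p hp).2]]
  simp [(hE p hp).1.ne', hp]

lemma zero_lt_fst_and_fst_lt_snd_of_mem_erase (hord : ∀ p ∈ E, p.1 ≤ p.2)
    (hdiag : ∀ p ∈ E, p.1 = p.2 → p = (0, 0)) (hrow : ∀ j : Fin (n + 1), j ≠ 0 → (0, j) ∉ E)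
    {q : Fin (n + 1) × Fin (n + 1)} (hq : q ∈ E.erase (0, 0)) : 0 < q.1 ∧ q.1 < q.2 := by
  obtain ⟨hq0, hqE⟩ := Finset.mem_erase.1 hq
  have hlt : q.1 < q.2 := (hord q hqE).lt_of_ne fun h => hq0 (hdiag q hqE h)
  refine ⟨Fin.pos_iff_ne_zero.2 fun h₁ => hrow q.2 ((Fin.zero_le _).trans_lt hlt).ne' ?_, hlt⟩
  rwa [← h₁]

end completionC

theorem cp_completion_one_diagonal_empty_row_general {n : ℕ} (E : Finset (Fin (n+1) × Fin (n+1)))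
    (A : Fin (n+1) × Fin (n+1) → ℝ)
    (hord : ∀ p ∈ E, p.1 ≤ p.2)
    (hdiag : ∀ p ∈ E, p.1 = p.2 → p = (0, 0))
    (hrow : ∀ j : Fin (n+1), j ≠ 0 → ((0 : Fin (n+1)), j) ∉ E)
    (hA : ∀ p ∈ E, 0 ≤ A p)
    (hpos : 0 < A (0, 0)) :
    IsCP (completionC E A) ∧ ∀ p ∈ E, completionC E A p.1 p.2 = A p := by
  refine ⟨isCP_completionC hpos.le fun p hp => hA p (Finset.mem_of_mem_erase hp), fun p hp => ?_⟩
  have hE := fun q (hq : q ∈ E.erase (0, 0)) =>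
    zero_lt_fst_and_fst_lt_snd_of_mem_erase hord hdiag hrow hq
  rcases eq_or_ne p (0, 0) with rfl | hp0
  · exact completionC_apply_zero_zero hE
  · exact completionC_apply_of_mem_erase hE (Finset.mem_erase.2 ⟨hp0, hp⟩)

/-- If the only given diagonal entry is `A₀₀ > 0` and no other entries in the
first row are given, then `completionC E A` is a completely positive
completion of `A`. -/
theorem cp_completion_one_diagonal_empty_row {n : ℕ} (E : Finset (Fin (n+1) × Fin (n+1)))
    (A : Fin (n+1) × Fin (n+1) → ℝ)
    (hord : ∀ p ∈ E, p.1 ≤ p.2)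
    (h00 : ((0, 0) : Fin (n+1) × Fin (n+1)) ∈ E)
    (hdiag : ∀ p ∈ E, p.1 = p.2 → p = (0, 0))
    (hrow : ∀ j : Fin (n+1), j ≠ 0 → ((0 : Fin (n+1)), j) ∉ E)
    (hA : ∀ p ∈ E, 0 ≤ A p)
    (hpos : 0 < A (0, 0)) :
    IsCP (completionC E A) ∧ ∀ p ∈ E, completionC E A p.1 p.2 = A p :=
  cp_completion_one_diagonal_empty_row_general E A hord hdiag hrow hA hpos
end

section
/- The 3×3 partial symmetric matrix with given entries A₁₁=1, A₁₂=1, A₁₃=2, A₂₂=1, A₂₃=3 and missing (3,3)-entry is not CP-completable: for every value t of the (3,3)-entry, the completed matrix has determinant −1 and hence is not positive semidefinite, so it is not completely positive. However, its maximum principal submatrix [[1,1],[1,1]] is completely positive. -/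
open Matrix

theorem Matrix.not_posSemidef_of_det_neg {n : Type*} [Fintype n] [DecidableEq n]
    {A : Matrix n n ℝ} (h : A.det < 0) : ¬ A.PosSemidef :=
  fun hA => h.not_ge hA.det_nonneg

theorem IsCP.posSemidef_s14 {n : ℕ} {C : Matrix (Fin n) (Fin n) ℝ} (h : IsCP C) : C.PosSemidef := by
  obtain ⟨m, B, -, rfl⟩ := h
  simpa using posSemidef_self_mul_conjTranspose B

theorem isCP_vecMulVec_self {n : ℕ} {v : Fin n → ℝ} (hv : 0 ≤ v) : IsCP (vecMulVec v v) :=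
  ⟨1, replicateCol (Fin 1) v, fun i _ => hv i, by
    rw [vecMulVec_eq (Fin 1), transpose_replicateCol]; rfl⟩

theorem det_completion_eq_neg_one (t : ℝ) :
    (!![1, 1, 2; 1, 1, 3; 2, 3, t] : Matrix (Fin 3) (Fin 3) ℝ).det = -1 := by
  rw [det_fin_three]
  simp only [of_apply, cons_val', cons_val_zero, cons_val_one, cons_val_two, empty_val',
    cons_val_fin_one, head_cons, tail_cons, head_fin_const]
  ring

/-- The partial matrix of (3.2) is not CP-completable: for every value `t` of
the missing `(3,3)`-entry the completed matrix has determinant `-1`, hence is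
not positive semidefinite and not completely positive.  Nevertheless its
maximum principal submatrix `[[1,1],[1,1]]` is completely positive. -/
theorem counterexample_partial_cp_completable :
    (∀ t : ℝ,
      (!![1, 1, 2; 1, 1, 3; 2, 3, t] : Matrix (Fin 3) (Fin 3) ℝ).det = -1 ∧
      ¬ (!![1, 1, 2; 1, 1, 3; 2, 3, t] : Matrix (Fin 3) (Fin 3) ℝ).PosSemidef ∧
      ¬ IsCP !![1, 1, 2; 1, 1, 3; 2, 3, t]) ∧
    IsCP !![(1 : ℝ), 1; 1, 1] := by
  refine ⟨fun t => ?_, ?_⟩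
  · have not_psd := not_posSemidef_of_det_neg (by rw [det_completion_eq_neg_one t]; norm_num)
    exact ⟨det_completion_eq_neg_one t, not_psd, mt IsCP.posSemidef_s14 not_psd⟩
  · have hv : (0 : Fin 2 → ℝ) ≤ ![1, 1] := fun i => by fin_cases i <;> simp
    convert isCP_vecMulVec_self hv using 1
    ext i j
    fin_cases i <;> fin_cases j <;> simp [vecMulVec_apply]
end

section
/- Let A be a partial symmetric n×n matrix whose leading (n−1)×(n−1) principal block A′ is fully given and completely positive, whose off-diagonal entries A_{i,n} ≥ 0 (i=1,…,n−1) are given, and whose (n,n)-entry is missing. Then for every ε > 0, the partial matrix obtained from A by replacing A′ with A′ + ε I_{n−1} is CP-completable. Consequently, there exists a sequence of CP-completable partial matrices whose given entries converge to those of A. -/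
open Filter

lemma cp_sum_outer {k m : ℕ} (u : Fin m → Fin k → ℝ) (hu : ∀ t i, 0 ≤ u t i) :
    IsCP (Matrix.of fun i j => ∑ t, u t i * u t j) := by
  refine ⟨m, Matrix.of fun i t => u t i, fun i j => hu j i, ?_⟩
  ext i j
  simp [Matrix.mul_apply, Matrix.transpose_apply]

lemma cp_add {k : ℕ} {C₁ C₂ : Matrix (Fin k) (Fin k) ℝ} (h₁ : IsCP C₁) (h₂ : IsCP C₂) :
    IsCP (C₁ + C₂) := by
  obtain ⟨m₁, B₁, hB₁, rfl⟩ := h₁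
  obtain ⟨m₂, B₂, hB₂, rfl⟩ := h₂
  refine ⟨m₁ + m₂, Matrix.of fun i t =>
    if h : (t : ℕ) < m₁ then B₁ i ⟨t, h⟩ else B₂ i ⟨t - m₁, by omega⟩, ?_, ?_⟩
  · intro i j; dsimp only [Matrix.of_apply]
    split
    · exact hB₁ _ _
    · exact hB₂ _ _
  · ext i j
    simp only [Matrix.add_apply, Matrix.mul_apply, Matrix.transpose_apply, Matrix.of_apply]
    rw [Fin.sum_univ_add]
    congr 1
    · refine Finset.sum_congr rfl fun t _ => ?_
      have h : ((Fin.castAdd m₂ t : Fin (m₁+m₂)) : ℕ) < m₁ := t.isLt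
      rw [dif_pos h, dif_pos h]
      congr 2 <;> exact Fin.ext rfl
    · refine Finset.sum_congr rfl fun t _ => ?_
      have h : ¬ ((Fin.natAdd m₁ t : Fin (m₁+m₂)) : ℕ) < m₁ := by simp
      rw [dif_neg h, dif_neg h]
      congr 2 <;> exact Fin.ext (by simp)

/-- Let the partial `(n+1)×(n+1)` matrix have a fully given completely positive
leading block `A'`, given nonnegative last-column entries `b i = A_{i,n}`, and a
missing `(n,n)`-entry.  Then for every `ε > 0` the partial matrix with `A'`
replaced by `A' + ε I` is CP-completable, and consequently there is a sequence
of CP-completable partial matrices whose given entries converge to those of the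
original partial matrix. -/
theorem cp_completable_perturbation {n : ℕ} (A' : Matrix (Fin n) (Fin n) ℝ)
    (hA' : IsCP A') (b : Fin n → ℝ) (hb : ∀ i, 0 ≤ b i) :
    (∀ ε : ℝ, 0 < ε → ∃ C : Matrix (Fin (n+1)) (Fin (n+1)) ℝ,
      IsCP C ∧
      (∀ i j : Fin n, C i.castSucc j.castSucc = A' i j + ε * (if i = j then 1 else 0)) ∧
      (∀ i : Fin n, C i.castSucc (Fin.last n) = b i ∧ C (Fin.last n) i.castSucc = b i)) ∧
    (∃ Cseq : ℕ → Matrix (Fin (n+1)) (Fin (n+1)) ℝ,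
      (∀ k, IsCP (Cseq k)) ∧
      (∀ i j : Fin n,
        Tendsto (fun k => Cseq k i.castSucc j.castSucc) atTop (nhds (A' i j))) ∧
      (∀ k, ∀ i : Fin n,
        Cseq k i.castSucc (Fin.last n) = b i ∧ Cseq k (Fin.last n) i.castSucc = b i)) := by
  obtain ⟨m, B, hB, hAB⟩ := hA'
  have main : ∀ ε : ℝ, 0 < ε → ∃ C : Matrix (Fin (n+1)) (Fin (n+1)) ℝ,
      IsCP C ∧
      (∀ i j : Fin n, C i.castSucc j.castSucc = A' i j + ε * (if i = j then 1 else 0)) ∧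
      (∀ i : Fin n, C i.castSucc (Fin.last n) = b i ∧ C (Fin.last n) i.castSucc = b i) := by
    intro ε hε
    set s := Real.sqrt ε with hs_def
    have hs : 0 < s := Real.sqrt_pos.mpr hε
    -- three families of nonnegative vectors
    set u₁ : Fin m → Fin (n+1) → ℝ :=
      fun t i => if h : (i : ℕ) < n then B ⟨i, h⟩ t else 0 with hu₁
    set u₂ : Fin 1 → Fin (n+1) → ℝ :=
      fun _ i => if (i : ℕ) < n then 0 else 1 with hu₂
    set u₃ : Fin n → Fin (n+1) → ℝ :=
      fun k i => if h : (i : ℕ) < n then (if (⟨i, h⟩ : Fin n) = k then s else 0)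
        else b k / s with hu₃
    set C : Matrix (Fin (n+1)) (Fin (n+1)) ℝ :=
      (Matrix.of fun i j => ∑ t, u₁ t i * u₁ t j)
      + (Matrix.of fun i j => ∑ t, u₂ t i * u₂ t j)
      + (Matrix.of fun i j => ∑ t, u₃ t i * u₃ t j) with hC
    have hCP : IsCP C := by
      refine cp_add (cp_add (cp_sum_outer _ ?_) (cp_sum_outer _ ?_)) (cp_sum_outer _ ?_)
      · intro t i; dsimp [u₁]; split
        · exact hB _ _
        · exact le_refl 0
      · intro t i; dsimp [u₂]; split <;> norm_num
      · intro t i; dsimp [u₃]; split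
        · split
          · exact hs.le
          · exact le_refl 0
        · exact div_nonneg (hb _) hs.le
    have hcast : ∀ i : Fin n, ((i.castSucc : Fin (n+1)) : ℕ) < n := fun i => by simp
    have hlast : ¬ ((Fin.last n : Fin (n+1)) : ℕ) < n := by simp
    have hmk : ∀ (i : Fin n) (h : ((i.castSucc : Fin (n+1)) : ℕ) < n),
        (⟨(i.castSucc : Fin (n+1)), h⟩ : Fin n) = i := fun i h => Fin.ext (by simp)
    refine ⟨C, hCP, ?_, ?_⟩
    · intro i j
      simp only [hC, Matrix.add_apply, Matrix.of_apply]
      have e1 : ∑ t, u₁ t i.castSucc * u₁ t j.castSucc = A' i j := by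
        rw [hAB]
        simp only [hu₁, dif_pos (hcast i), dif_pos (hcast j), hmk, Matrix.mul_apply,
          Matrix.transpose_apply]
      have e2 : ∑ t, u₂ t i.castSucc * u₂ t j.castSucc = 0 := by
        simp [hu₂, if_pos (hcast i)]
      have e3 : ∑ t, u₃ t i.castSucc * u₃ t j.castSucc = ε * (if i = j then 1 else 0) := by
        simp only [hu₃, dif_pos (hcast i), dif_pos (hcast j), hmk]
        rw [Finset.sum_eq_single i]
        · by_cases h : i = j
          · simp [h, hs_def, Real.mul_self_sqrt hε.le]
          · simp [h, Ne.symm h]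
        · intro k _ hk; simp [Ne.symm hk]
        · simp
      rw [e1, e2, e3, add_zero]
    · intro i
      constructor
      · simp only [hC, Matrix.add_apply, Matrix.of_apply]
        have e1 : ∑ t, u₁ t i.castSucc * u₁ t (Fin.last n) = 0 := by
          simp [hu₁, dif_neg hlast]
        have e2 : ∑ t, u₂ t i.castSucc * u₂ t (Fin.last n) = 0 := by
          simp [hu₂, if_pos (hcast i)]
        have e3 : ∑ t, u₃ t i.castSucc * u₃ t (Fin.last n) = b i := by
          simp only [hu₃, dif_pos (hcast i), dif_neg hlast, hmk]
          rw [Finset.sum_eq_single i]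
          · rw [if_pos rfl, mul_comm, div_mul_cancel₀ _ hs.ne']
          · intro k _ hk; simp [Ne.symm hk]
          · simp
        rw [e1, e2, e3, zero_add, zero_add]
      · simp only [hC, Matrix.add_apply, Matrix.of_apply]
        have e1 : ∑ t, u₁ t (Fin.last n) * u₁ t i.castSucc = 0 := by
          simp [hu₁, dif_neg hlast]
        have e2 : ∑ t, u₂ t (Fin.last n) * u₂ t i.castSucc = 0 := by
          simp [hu₂, if_pos (hcast i)]
        have e3 : ∑ t, u₃ t (Fin.last n) * u₃ t i.castSucc = b i := by
          simp only [hu₃, dif_pos (hcast i), dif_neg hlast, hmk]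
          rw [Finset.sum_eq_single i]
          · rw [if_pos rfl, div_mul_cancel₀ _ hs.ne']
          · intro k _ hk; simp [Ne.symm hk]
          · simp
        rw [e1, e2, e3, zero_add, zero_add]
  refine ⟨main, ?_⟩
  have hpos : ∀ k : ℕ, (0:ℝ) < ((k:ℝ)+1)⁻¹ := fun k => by positivity
  refine ⟨fun k => (main ((k:ℝ)+1)⁻¹ (hpos k)).choose,
    fun k => (main ((k:ℝ)+1)⁻¹ (hpos k)).choose_spec.1, ?_,
    fun k => (main ((k:ℝ)+1)⁻¹ (hpos k)).choose_spec.2.2⟩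
  intro i j
  have heq : ∀ k : ℕ, (main ((k:ℝ)+1)⁻¹ (hpos k)).choose i.castSucc j.castSucc
      = A' i j + ((k:ℝ)+1)⁻¹ * (if i = j then 1 else 0) :=
    fun k => (main ((k:ℝ)+1)⁻¹ (hpos k)).choose_spec.2.1 i j
  simp only [heq]
  have h0 : Tendsto (fun k : ℕ => ((k:ℝ)+1)⁻¹ * (if i = j then (1:ℝ) else 0)) atTop (nhds 0) := by
    have := tendsto_one_div_add_atTop_nhds_zero_nat (𝕜 := ℝ)
    simpa [one_div] using this.mul_const (if i = j then (1:ℝ) else 0)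
  have := (tendsto_const_nhds : Tendsto (fun _ : ℕ => A' i j) atTop (nhds (A' i j))).add h0
  simpa using this
end
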